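/- arXiv:1108.6013 — 2 statements merged into one kernel-verified Lean document; each statement's English description precedes it below -/
import Mathlib

section
/- Orbit classification for vertical triples: let n > m, and let (U, 0, C) and (U', 0, C') be triples in V_{m,n} such that the top m×m blocks Q of U and Q' of U' are invertible. Then there exists (A,A,B) ∈ L̂²_m with (U,0,C)·(A,A,B) = (U',0,C') if and only if there exists an invertible m×m real matrix A with U' = UA and v^α_{ij}(U,C) = v^α_{ij}(U',C') for all α ∈ {m+1,…,n} and all i,j. -/
open Matrix BigOperators

noncomputable section

/-- Square m×m real matrices. -/
abbrev Mat (m : ℕ) := Matrix (Fin m) (Fin m) ℝ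

/-- Arrays B^i_{jk} of real numbers. -/
abbrev Arr (m : ℕ) := Fin m → Fin m → Fin m → ℝ

/-- Underlying data of an element (P, A, B) of the principal jet group Π_m. -/
abbrev PiEl (m : ℕ) := Mat m × Mat m × Arr m

/-- Membership in Π_m : both matrices P and A are invertible. -/
def inPi {m : ℕ} (x : PiEl m) : Prop := IsUnit x.1 ∧ IsUnit x.2.1

/-- The multiplication of Π_m :
`(P₁,A₁,B₁)·(P₂,A₂,B₂) = (P₁P₂, A₁A₂, B₃)` with
`B₃^i_{jk} = Σ_{h,l} B₁^i_{hl} A₂^h_j P₂^l_k + Σ_h A₁^i_h B₂^h_{jk}`. -/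
def piMul {m : ℕ} (x y : PiEl m) : PiEl m :=
  (x.1 * y.1, x.2.1 * y.2.1,
    fun i j k => (∑ h, ∑ l, x.2.2 i h l * y.2.1 h j * y.1 l k) + ∑ h, x.2.1 i h * y.2.2 h j k)

/-- The identity element (I, I, 0) of Π_m. -/
def piOne (m : ℕ) : PiEl m := (1, 1, fun _ _ _ => 0)

/-- The inverse (P⁻¹, A⁻¹, B⁻) with
`B⁻^i_{jk} = − Σ_{h,p,l} (A⁻¹)^i_h B^h_{pl} (A⁻¹)^p_j (P⁻¹)^l_k`. -/
def piInv {m : ℕ} (x : PiEl m) : PiEl m :=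
  (x.1⁻¹, x.2.1⁻¹,
    fun i j k => -∑ h, ∑ p, ∑ l, x.2.1⁻¹ i h * x.2.2 h p l * x.2.1⁻¹ p j * x.1⁻¹ l k)

/-- Rectangular n×m real matrices. -/
abbrev RMat (m n : ℕ) := Matrix (Fin n) (Fin m) ℝ

/-- Arrays C^a_{ij}, a ∈ Fin n, i j ∈ Fin m. -/
abbrev CArr (m n : ℕ) := Fin n → Fin m → Fin m → ℝ

/-- Underlying data (U, W, C) of an element of V_{m,n}. -/
abbrev VEl (m n : ℕ) := RMat m n × RMat m n × CArr m n

/-- The right action of Π_m on V_{m,n}: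
`(U,W,C)·(P,A,B) = (UA, WP, C')` with
`C'^a_{ij} = Σ_{h,k} C^a_{hk} A^h_i P^k_j + Σ_h U^a_h B^h_{ij}`. -/
def vact {m n : ℕ} (v : VEl m n) (g : PiEl m) : VEl m n :=
  (v.1 * g.2.1, v.2.1 * g.1,
    fun a i j => (∑ h, ∑ k, v.2.2 a h k * g.2.1 h i * g.1 k j) + ∑ h, v.1 a h * g.2.2 h i j)

/-- The top m×m block Q of an n×m matrix U (rows 1,…,m). -/
def topBlock {m n : ℕ} (hmn : m ≤ n) (U : RMat m n) : Mat m :=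
  fun i j => U (Fin.castLE hmn i) j

/-- The quotient coordinates: with r = Q⁻¹ the inverse of the top block of U,
`v^α_{ij}(U,C) = Σ_{h,k} C^α_{hk} r^h_i r^k_j
              − Σ_{h,k,p,q} U^α_h r^h_k C^k_{pq} r^p_i r^q_j`. -/
def vcoord {m n : ℕ} (hmn : m ≤ n) (U : RMat m n) (C : CArr m n)
    (α : Fin n) (i j : Fin m) : ℝ :=
  (∑ h, ∑ k, C α h k * (topBlock hmn U)⁻¹ h i * (topBlock hmn U)⁻¹ k j) -
    ∑ h, ∑ k, ∑ p, ∑ q, U α h * (topBlock hmn U)⁻¹ h k *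
      C (Fin.castLE hmn k) p q * (topBlock hmn U)⁻¹ p i * (topBlock hmn U)⁻¹ q j

/-!
Read each slice `C^a` as an m×m matrix and put `r = Q⁻¹`. Then `v^α = rᵀ w^α r`, where
`w^α = C^α - Σ_k (U r)^α_k C^k` (`vertPart`) removes from `C^α` the combination of top rows
in which row `α` of `U` is a combination of the rows of `Q`. Acting by `(A, A, B)` fixes `U r`,
sends `r` to `A⁻¹ r` and `w^α` to `Aᵀ w^α A`: the contributions of `B` cancel because
`U r Q = U`. Hence `v` is invariant. Conversely, since `Q` is invertible, `B` can be chosen so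
that the transformed triple has the top rows of `C'`; then `w^α` of the two triples differ by
the difference of their rows `α`, and congruence by the invertible `r` is injective, so equal
`v^α` force equal rows.
-/

theorem transpose_mul_mul_apply {ι κ μ ν R : Type*} [Fintype κ] [Fintype μ] [CommSemiring R]
    (M : Matrix κ μ R) (X : Matrix κ ι R) (Y : Matrix μ ν R) (i : ι) (j : ν) :
    (Xᵀ * M * Y) i j = ∑ h, ∑ k, M h k * X h i * Y k j := by
  simp only [mul_apply, transpose_apply, Finset.sum_mul]
  rw [Finset.sum_comm]
  exact Finset.sum_congr rfl fun _ _ => Finset.sum_congr rfl fun _ _ => by ring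

theorem topBlock_apply {m n : ℕ} (hmn : m ≤ n) (U : RMat m n) (k l : Fin m) :
    topBlock hmn U k l = U (Fin.castLE hmn k) l := rfl

theorem topBlock_mul {m n : ℕ} (hmn : m ≤ n) (U : RMat m n) (M : Mat m) :
    topBlock hmn (U * M) = topBlock hmn U * M := rfl

theorem sum_smul_sum_smul {ι κ μ M : Type*} [Fintype κ] [Fintype μ] [AddCommMonoid M]
    [Module ℝ M] (X : Matrix ι κ ℝ) (Y : Matrix κ μ ℝ) (B : μ → M) (i : ι) :
    ∑ k, X i k • ∑ l, Y k l • B l = ∑ l, (X * Y) i l • B l := by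
  simp only [Finset.smul_sum, smul_smul, mul_apply, Finset.sum_smul]
  exact Finset.sum_comm

theorem vact_snd_snd {m n : ℕ} (v : VEl m n) (g : PiEl m) (a : Fin n) :
    of ((vact v g).2.2 a) = g.2.1ᵀ * of (v.2.2 a) * g.1 + ∑ h, v.1 a h • of (g.2.2 h) := by
  ext i j
  simp [vact, transpose_mul_mul_apply, Matrix.sum_apply]

def vertPart {m n : ℕ} (hmn : m ≤ n) (U : RMat m n) (C : CArr m n) (α : Fin n) : Mat m :=
  of (C α) - ∑ k, (U * (topBlock hmn U)⁻¹) α k • of (C (Fin.castLE hmn k))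

theorem vcoord_eq {m n : ℕ} (hmn : m ≤ n) (U : RMat m n) (C : CArr m n) (α : Fin n) :
    of (vcoord hmn U C α) =
      (topBlock hmn U)⁻¹ᵀ * vertPart hmn U C α * (topBlock hmn U)⁻¹ := by
  ext i j
  simp only [vertPart, Matrix.mul_sub, Matrix.sub_mul, Matrix.mul_sum, Matrix.sum_mul,
    Matrix.mul_smul, Matrix.smul_mul, Matrix.sub_apply, Matrix.sum_apply, Matrix.smul_apply,
    smul_eq_mul, transpose_mul_mul_apply, vcoord, of_apply]
  congr 1
  rw [Finset.sum_comm]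
  refine Finset.sum_congr rfl fun k _ => ?_
  rw [mul_apply, Finset.sum_mul]
  refine Finset.sum_congr rfl fun h _ => ?_
  simp only [Finset.mul_sum]
  exact Finset.sum_congr rfl fun _ _ => Finset.sum_congr rfl fun _ _ => by ring

theorem vertPart_vact {m n : ℕ} (hmn : m ≤ n) {U : RMat m n} (hQ : IsUnit (topBlock hmn U))
    {A : Mat m} (hA : IsUnit A) (W : RMat m n) (C : CArr m n) (P : Mat m) (B : Arr m)
    (α : Fin n) :
    vertPart hmn (U * A) (vact (U, W, C) (P, A, B)).2.2 α = Aᵀ * vertPart hmn U C α * P := by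
  have hUA : U * A * (topBlock hmn (U * A))⁻¹ = U * (topBlock hmn U)⁻¹ := by
    rw [topBlock_mul, Matrix.mul_inv_rev, Matrix.mul_assoc, A.mul_nonsing_inv_cancel_left _
      ((isUnit_iff_isUnit_det A).1 hA)]
  have hUQ : U * (topBlock hmn U)⁻¹ * topBlock hmn U = U :=
    nonsing_inv_mul_cancel_right _ U ((isUnit_iff_isUnit_det _).1 hQ)
  simp only [vertPart, hUA, vact_snd_snd, smul_add, Finset.sum_add_distrib, ← topBlock_apply]
  rw [sum_smul_sum_smul (U * (topBlock hmn U)⁻¹) (topBlock hmn U), hUQ]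
  simp only [Matrix.mul_sub, Matrix.sub_mul, Matrix.mul_sum, Matrix.sum_mul, Matrix.mul_smul,
    Matrix.smul_mul]
  abel

theorem vcoord_vact {m n : ℕ} (hmn : m ≤ n) {U : RMat m n} (hQ : IsUnit (topBlock hmn U))
    {A : Mat m} (hA : IsUnit A) (W : RMat m n) (C : CArr m n) (B : Arr m) (α : Fin n) :
    vcoord hmn (U * A) (vact (U, W, C) (A, A, B)).2.2 α = vcoord hmn U C α := by
  have hdet : IsUnit A.det := (isUnit_iff_isUnit_det A).1 hA
  have hAt : A⁻¹ᵀ * Aᵀ = 1 := by rw [← transpose_mul, mul_nonsing_inv _ hdet, transpose_one]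
  apply of.injective
  rw [vcoord_eq, vcoord_eq, vertPart_vact hmn hQ hA, topBlock_mul, Matrix.mul_inv_rev,
    transpose_mul]
  simp only [Matrix.mul_assoc]
  rw [← Matrix.mul_assoc A⁻¹ᵀ, hAt, Matrix.one_mul, ← Matrix.mul_assoc A,
    mul_nonsing_inv _ hdet, Matrix.one_mul]

theorem exists_vact_top_eq {m n : ℕ} (hmn : m ≤ n) {U : RMat m n}
    (hQ : IsUnit (topBlock hmn U)) (W : RMat m n) (C : CArr m n) (P A : Mat m)
    (C' : CArr m n) :
    ∃ B : Arr m, ∀ k,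
      (vact (U, W, C) (P, A, B)).2.2 (Fin.castLE hmn k) = C' (Fin.castLE hmn k) := by
  refine ⟨fun h => of.symm (∑ l, (topBlock hmn U)⁻¹ h l •
    (of (C' (Fin.castLE hmn l)) - Aᵀ * of (C (Fin.castLE hmn l)) * P)), fun k => ?_⟩
  apply of.injective
  rw [vact_snd_snd]
  simp only [Equiv.apply_symm_apply, ← topBlock_apply]
  rw [sum_smul_sum_smul, mul_nonsing_inv _ ((isUnit_iff_isUnit_det _).1 hQ)]
  simp [one_apply]

theorem apply_eq_of_vcoord_eq {m n : ℕ} (hmn : m ≤ n) {U : RMat m n}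
    (hQ : IsUnit (topBlock hmn U)) {C₁ C₂ : CArr m n}
    (htop : ∀ k, C₁ (Fin.castLE hmn k) = C₂ (Fin.castLE hmn k)) {α : Fin n}
    (hv : vcoord hmn U C₁ α = vcoord hmn U C₂ α) : C₁ α = C₂ α := by
  have hr : IsUnit (topBlock hmn U)⁻¹ := isUnit_nonsing_inv_iff.2 hQ
  have hvert := congrArg of hv
  rw [vcoord_eq, vcoord_eq] at hvert
  replace hvert := ((isUnit_transpose _).2 hr |>.mul_left_cancel (hr.mul_right_cancel hvert))
  simp only [vertPart, htop, sub_left_inj] at hvert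
  exact of.injective hvert

theorem stmt_17_general (m n : ℕ) (hmn : m < n)
    (U U' : RMat m n) (C C' : CArr m n)
    (hQ : IsUnit (topBlock hmn.le U)) (hQ' : IsUnit (topBlock hmn.le U')) :
    (∃ (A : Mat m) (B : Arr m), IsUnit A ∧
        vact (U, 0, C) (A, A, B) = (U', 0, C')) ↔
    (∃ A : Mat m, IsUnit A ∧ U' = U * A ∧
        ∀ α : Fin n, m ≤ (α : ℕ) → ∀ i j : Fin m,
          vcoord hmn.le U C α i j = vcoord hmn.le U' C' α i j) := by
  constructor
  · rintro ⟨A, B, hA, hact⟩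
    have hU : U * A = U' := congrArg Prod.fst hact
    have hC : (vact (U, 0, C) (A, A, B)).2.2 = C' := congrArg (·.2.2) hact
    refine ⟨A, hA, hU.symm, fun α _ i j => ?_⟩
    rw [← hU, ← hC, vcoord_vact hmn.le hQ hA]
  · rintro ⟨A, hA, rfl, hv⟩
    obtain ⟨B, hB⟩ := exists_vact_top_eq hmn.le hQ 0 C A A C'
    have hC : (vact (U, 0, C) (A, A, B)).2.2 = C' := by
      funext α
      by_cases hα : (α : ℕ) < m
      · exact hB ⟨α, hα⟩
      · refine apply_eq_of_vcoord_eq hmn.le hQ' hB ?_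
        rw [vcoord_vact hmn.le hQ hA]
        exact funext fun i => funext (hv α (not_lt.1 hα) i)
    exact ⟨A, B, hA, Prod.ext rfl (Prod.ext (Matrix.zero_mul A) hC)⟩

/-- orbit classification for vertical triples: two vertical triples
(U,0,C) and (U',0,C') with invertible top blocks lie on the same L̂²_m-orbit iff
there is an invertible A with U' = UA and matching quotient coordinates v. -/
theorem stmt_17 (m n : ℕ) (hm : 1 ≤ m) (hmn : m < n)
    (U U' : RMat m n) (C C' : CArr m n)
    (hQ : IsUnit (topBlock hmn.le U)) (hQ' : IsUnit (topBlock hmn.le U')) :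
    (∃ (A : Mat m) (B : Arr m), IsUnit A ∧
        vact (U, 0, C) (A, A, B) = (U', 0, C')) ↔
    (∃ A : Mat m, IsUnit A ∧ U' = U * A ∧
        ∀ α : Fin n, m ≤ (α : ℕ) → ∀ i j : Fin m,
          vcoord hmn.le U C α i j = vcoord hmn.le U' C' α i j) :=
  stmt_17_general m n hmn U U' C C' hQ hQ'
end
end

section
/- The holonomic component of a semiholonomic element is independent of the representative: let U be an n×m real matrix of rank m, and suppose (U,U,C)·(P,A,B) = (U',U',C') for some (P,A,B) ∈ Π_m. Then P = A, the element (A, A, B_sym) with B_sym^i_{jk} = (B^i_{jk}+B^i_{kj})/2 belongs to the holonomic subgroup L̄²_m, and (U,U,C_sym)·(A,A,B_sym) = (U',U',C'_sym), where C_sym^a_{ij} = (C^a_{ij}+C^a_{ji})/2 and C'_sym^a_{ij} = (C'^a_{ij}+C'^a_{ji})/2. -/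
open Matrix BigOperators

noncomputable section

/-!
Comparing the first two components, `U A = U P`, and a matrix of full column rank can be
cancelled on the left, so `P = A`. Once `P = A`, the action is compatible with symmetrizing the
two lower indices of `B` and `C`: the quadratic term `Σ C^a_{hk} A^h_i A^k_j` turns into its
transpose in `i, j` when the indices `h, k` of `C` are swapped, and the linear term
`Σ U^a_h B^h_{ij}` is linear in `B`.
-/

section FullColumnRank

variable {K ι κ ο : Type*} [Field K] [Fintype κ]

theorem Matrix.mulVec_injective_of_rank_eq_card {U : Matrix ι κ K}
    (hU : U.rank = Fintype.card κ) : Function.Injective U.mulVec := by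
  change Function.Injective U.mulVecLin
  rw [← LinearMap.ker_eq_bot, ← Submodule.finrank_eq_zero]
  have h := LinearMap.finrank_range_add_finrank_ker U.mulVecLin
  rw [Module.finrank_fintype_fun_eq_card] at h
  change U.rank + _ = _ at h
  omega

theorem Matrix.mul_left_cancel_of_rank_eq_card [Fintype ο] {U : Matrix ι κ K}
    (hU : U.rank = Fintype.card κ) {X Y : Matrix κ ο K} (h : U * X = U * Y) : X = Y :=
  ext_iff_mulVec.mpr fun v => mulVec_injective_of_rank_eq_card hU <| by
    rw [mulVec_mulVec, mulVec_mulVec, h]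

end FullColumnRank

def symmLower {α β : Type*} (C : α → β → β → ℝ) : α → β → β → ℝ :=
  fun a i j => (C a i j + C a j i) / 2

theorem vact_symmLower {m n : ℕ} (U W : RMat m n) (C : CArr m n) (A : Mat m) (B : Arr m) :
    vact (U, W, symmLower C) (A, A, symmLower B) =
      ((vact (U, W, C) (A, A, B)).1, (vact (U, W, C) (A, A, B)).2.1,
        symmLower (vact (U, W, C) (A, A, B)).2.2) := by
  refine Prod.ext rfl (Prod.ext rfl ?_)
  funext a i j
  have quadratic_transpose :
      ∑ h, ∑ k, C a k h * A h i * A k j = ∑ h, ∑ k, C a h k * A h j * A k i := by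
    rw [Finset.sum_comm]
    exact Finset.sum_congr rfl fun _ _ => Finset.sum_congr rfl fun _ _ => by ring
  simp only [vact, symmLower, add_div, Finset.sum_div, add_mul, mul_add, Finset.sum_add_distrib,
    ← quadratic_transpose]
  simp only [div_mul_eq_mul_div, mul_div_assoc']
  ring

theorem stmt_18_general (m n : ℕ)
    (U U' : RMat m n) (C C' : CArr m n) (hU : U.rank = m)
    (P A : Mat m) (B : Arr m) (hA : IsUnit A)
    (h : vact (U, U, C) (P, A, B) = (U', U', C')) :
    P = A ∧
    (IsUnit A ∧ ∀ i j k,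
      (B i j k + B i k j) / 2 = (B i k j + B i j k) / 2) ∧
    vact (U, U, fun a i j => (C a i j + C a j i) / 2)
        (A, A, fun i j k => (B i j k + B i k j) / 2)
      = (U', U', fun a i j => (C' a i j + C' a j i) / 2) := by
  have hUA : U * A = U' := congrArg Prod.fst h
  have hUP : U * P = U' := congrArg (fun v => v.2.1) h
  obtain rfl : P = A :=
    mul_left_cancel_of_rank_eq_card (by rwa [Fintype.card_fin]) (hUP.trans hUA.symm)
  refine ⟨rfl, ⟨hA, fun _ _ _ => by rw [add_comm]⟩, ?_⟩
  have hsymm := vact_symmLower U U C P B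
  rw [h] at hsymm
  exact hsymm

/-- the holonomic component of a semiholonomic element does not depend
on the representative: if U has rank m and (U,U,C)·(P,A,B) = (U',U',C'), then P = A,
the symmetrized element (A,A,B_sym) lies in the holonomic subgroup L̄²_m, and
(U,U,C_sym)·(A,A,B_sym) = (U',U',C'_sym). -/
theorem stmt_18 (m n : ℕ) (hm : 1 ≤ m) (hmn : m ≤ n)
    (U U' : RMat m n) (C C' : CArr m n) (hU : U.rank = m)
    (P A : Mat m) (B : Arr m) (hP : IsUnit P) (hA : IsUnit A)
    (h : vact (U, U, C) (P, A, B) = (U', U', C')) :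
    P = A ∧
    (IsUnit A ∧ ∀ i j k,
      (B i j k + B i k j) / 2 = (B i k j + B i j k) / 2) ∧
    vact (U, U, fun a i j => (C a i j + C a j i) / 2)
        (A, A, fun i j k => (B i j k + B i k j) / 2)
      = (U', U', fun a i j => (C' a i j + C' a j i) / 2) :=
  stmt_18_general m n U U' C C' hU P A B hA h
end
end
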